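/- Let E = C([−1,1]; ℝ) with the supremum norm, let 𝟙 ∈ E be the constant function with value 1, and define the bounded operators on E: P by (Pf) = ((1/2)∫_{−1}^{1} f(x) dx)·𝟙, S by (Sf)(x) = f(−x), A := (−2·id − S) ∘ (id − P), and K by (Kf) = f(−1)·𝟙. Then for every α > 0 and every real λ > α, the operator λ·id − (A + α·K) is invertible in the algebra of bounded operators on E, and there exists a function f ∈ E with f ≥ 0 (pointwise) such that the resolvent applied to f is negative at −1, i.e., ((λ·id − (A + α·K))⁻¹ f)(−1) < 0. In particular, the resolvent of A + α·K is not individually eventually positive at the spectral value α. -/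

import Mathlib

open Set MeasureTheory intervalIntegral

noncomputable section

/-- The compact interval `[-1, 1]`. -/
abbrev II : Set ℝ := Set.Icc (-1 : ℝ) 1

/-- The Banach lattice `E = C([-1,1]; ℝ)`. -/
abbrev EE : Type := C(II, ℝ)

lemma neg_mem_II {x : ℝ} (hx : x ∈ II) : -x ∈ II := by
  obtain ⟨h1, h2⟩ := hx; exact ⟨by linarith, by linarith⟩

/-- The reflection `x ↦ -x` on `[-1,1]`. -/
def reflect : C(II, II) :=
  ⟨fun x => ⟨-(x : ℝ), neg_mem_II x.2⟩,
    (continuous_neg.comp continuous_subtype_val).subtype_mk _⟩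

/-- The reflection operator `S`, `(S f)(x) = f(-x)`. -/
def SOp : EE →L[ℝ] EE :=
  LinearMap.mkContinuous
    { toFun := fun f => f.comp reflect
      map_add' := fun f g => rfl
      map_smul' := fun c f => rfl }
    1
    (fun f => by
      rw [one_mul]
      refine (ContinuousMap.norm_le _ (norm_nonneg f)).mpr fun x => ?_
      exact f.norm_coe_le_norm _)

/-- The functional `f ↦ ∫_{-1}^{1} f(x) dx` on `C([-1,1]; ℝ)`. -/
def intFunc : EE →L[ℝ] ℝ :=
  LinearMap.mkContinuous
    { toFun := fun f => ∫ x in (-1 : ℝ)..1, f (Set.projIcc (-1) 1 (by norm_num) x)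
      map_add' := fun f g => by
        simp only [ContinuousMap.add_apply]
        exact integral_add
          ((f.continuous.comp continuous_projIcc).intervalIntegrable _ _)
          ((g.continuous.comp continuous_projIcc).intervalIntegrable _ _)
      map_smul' := fun c f => by
        simp only [ContinuousMap.smul_apply, RingHom.id_apply, smul_eq_mul]
        exact integral_smul c _ }
    2
    (fun f => by
      have h : ∀ x : ℝ, ‖f (Set.projIcc (-1) 1 (by norm_num) x)‖ ≤ ‖f‖ :=
        fun x => f.norm_coe_le_norm _
      calc ‖∫ x in (-1 : ℝ)..1, f (Set.projIcc (-1) 1 (by norm_num) x)‖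
          ≤ ‖f‖ * |1 - (-1 : ℝ)| :=
            intervalIntegral.norm_integral_le_of_norm_le_const fun x _ => h x
        _ = 2 * ‖f‖ := by rw [show |1 - (-1 : ℝ)| = 2 by norm_num]; ring)

/-- The averaging projection `P`, `P f = (½ ∫_{-1}^1 f dx) · 𝟙`. -/
def POp : EE →L[ℝ] EE :=
  ((1 / 2 : ℝ) • intFunc).smulRight (1 : EE)

/-- The operator `A = (-2·id - S) ∘ (id - P)`. -/
def AOp : EE →L[ℝ] EE :=
  ((-2 : ℝ) • ContinuousLinearMap.id ℝ EE - SOp) ∘L (ContinuousLinearMap.id ℝ EE - POp)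

/-- The rank-one perturbation `K`, `K f = f(-1) · 𝟙`. -/
def KOp : EE →L[ℝ] EE :=
  (ContinuousMap.evalCLM ℝ (⟨-1, by norm_num⟩ : II)).smulRight (1 : EE)

-- Auxiliary lemmas

-- basic lemmas
lemma one_apply' (x : II) : (1 : EE) x = 1 := rfl

lemma SOp_apply (f : EE) (x : II) : SOp f x = f ⟨-(x:ℝ), neg_mem_II x.2⟩ := rfl

lemma SOp_SOp (f : EE) : SOp (SOp f) = f := by
  ext x; simp only [SOp_apply]; congr 1; exact Subtype.ext (neg_neg _)

lemma SOp_one : SOp (1 : EE) = 1 := rfl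

lemma intFunc_apply (f : EE) :
    intFunc f = ∫ x in (-1 : ℝ)..1, f (Set.projIcc (-1) 1 (by norm_num) x) := rfl

lemma intFunc_one : intFunc (1 : EE) = 2 := by
  rw [intFunc_apply]
  norm_num [one_apply']

lemma intFunc_SOp (f : EE) : intFunc (SOp f) = intFunc f := by
  rw [intFunc_apply, intFunc_apply]
  have h1 : ∀ x ∈ Set.uIcc (-1:ℝ) 1,
      (SOp f) (Set.projIcc (-1) 1 (by norm_num) x) = f (Set.projIcc (-1) 1 (by norm_num) (-x)) := by
    intro x hx
    rw [Set.uIcc_of_le (by norm_num)] at hx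
    rw [Set.projIcc_of_mem _ hx, Set.projIcc_of_mem _ (neg_mem_II hx)]
    rfl
  rw [intervalIntegral.integral_congr h1]
  rw [intervalIntegral.integral_comp_neg fun x => f (Set.projIcc (-1) 1 (by norm_num) x)]
  norm_num

lemma POp_apply (f : EE) : POp f = (2⁻¹ * intFunc f) • (1 : EE) := by
  simp [POp, ContinuousLinearMap.smulRight_apply]

lemma KOp_apply (f : EE) : KOp f = f ⟨-1, by norm_num⟩ • (1 : EE) := rfl

lemma POp_smul_one (c : ℝ) : POp (c • (1 : EE)) = c • (1 : EE) := by
  rw [POp_apply, _root_.map_smul, smul_eq_mul, intFunc_one]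
  match_scalars; ring

lemma POp_POp (f : EE) : POp (POp f) = POp f := by
  rw [POp_apply f, POp_smul_one]

lemma SOp_POp (f : EE) : SOp (POp f) = POp f := by
  rw [POp_apply, _root_.map_smul, SOp_one]

lemma POp_SOp (f : EE) : POp (SOp f) = POp f := by
  rw [POp_apply, POp_apply, intFunc_SOp]

lemma AOp_apply (f : EE) : AOp f = (-2 : ℝ) • f + (3 : ℝ) • POp f - SOp f := by
  simp only [AOp, ContinuousLinearMap.comp_apply, ContinuousLinearMap.sub_apply,
    ContinuousLinearMap.smul_apply, ContinuousLinearMap.id_apply, map_sub, _root_.map_smul, SOp_POp]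
  module

lemma AOp_one : AOp (1 : EE) = 0 := by
  rw [AOp_apply, SOp_one, show (1:EE) = (1:ℝ) • (1:EE) by simp, POp_smul_one]
  module

lemma KOp_one : KOp (1 : EE) = 1 := by
  rw [KOp_apply, one_apply', one_smul]

/-- The resolvent of `A` at `l`. -/
def ROp (l : ℝ) : EE →L[ℝ] EE :=
  (1/l - 1/(l+3)) • POp
    + ((1/(l+3) + 1/(l+1))/2) • ContinuousLinearMap.id ℝ EE
    + ((1/(l+3) - 1/(l+1))/2) • SOp

lemma ROp_apply (l : ℝ) (f : EE) :
    ROp l f = (1/l - 1/(l+3)) • POp f + ((1/(l+3) + 1/(l+1))/2) • f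
      + ((1/(l+3) - 1/(l+1))/2) • SOp f := rfl

lemma R_resolv {l : ℝ} (hl : 0 < l) (f : EE) :
    l • ROp l f - AOp (ROp l f) = f := by
  have h0 : l ≠ 0 := ne_of_gt hl
  have h1 : l + 1 ≠ 0 := by positivity
  have h3 : l + 3 ≠ 0 := by positivity
  rw [ROp_apply]
  simp only [AOp_apply, map_add, _root_.map_smul, POp_POp, POp_SOp, SOp_POp, SOp_SOp, smul_add]
  match_scalars <;> field_simp <;> ring

lemma resolv_R {l : ℝ} (hl : 0 < l) (f : EE) :
    ROp l (l • f - AOp f) = f := by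
  have h0 : l ≠ 0 := ne_of_gt hl
  have h1 : l + 1 ≠ 0 := by positivity
  have h3 : l + 3 ≠ 0 := by positivity
  simp only [AOp_apply, map_sub, map_add, _root_.map_smul, ROp_apply, POp_POp, POp_SOp, SOp_POp,
    SOp_SOp, smul_add, smul_sub]
  match_scalars <;> field_simp <;> ring

lemma ROp_one {l : ℝ} (hl : 0 < l) : ROp l (1 : EE) = (1/l) • (1 : EE) := by
  have h0 : l ≠ 0 := ne_of_gt hl
  have h1 : l + 1 ≠ 0 := by positivity
  have h3 : l + 3 ≠ 0 := by positivity
  rw [ROp_apply, SOp_one, show (1:EE) = (1:ℝ) • (1:EE) by simp, POp_smul_one]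
  match_scalars; field_simp; ring

lemma evalCLM_apply (x : II) (f : EE) : ContinuousMap.evalCLM ℝ x f = f x := rfl

lemma AOp_of_R {l : ℝ} (hl : 0 < l) (f : EE) :
    AOp (ROp l f) = l • ROp l f - f := by
  have h := R_resolv hl f
  linear_combination (norm := module) (-1 : ℝ) • h

set_option maxHeartbeats 1000000 in
/-- **Example 2.4(c)** (resolvent part). For every `α > 0` and every `λ > α`, the
operator `λ·id - (A + α·K)` is invertible, but the resolvent of `A + α·K` at `λ` maps
some positive function `f` to a function which is negative at `-1`; hence the resolvent
of `A + α·K` is not individually eventually positive at the spectral value `α`. -/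
theorem resolvent_of_perturbed_operator_not_eventually_positive :
    ∀ α : ℝ, 0 < α → ∀ l : ℝ, α < l →
      IsUnit (algebraMap ℝ (EE →L[ℝ] EE) l - (AOp + α • KOp)) ∧
        ∃ f : EE, (∀ x : II, 0 ≤ f x) ∧
          (resolvent (AOp + α • KOp) l) f ⟨-1, by norm_num⟩ < 0 := by
  intro α hα l hl
  have hl0 : 0 < l := hα.trans hl
  have h0 : l ≠ 0 := ne_of_gt hl0
  have h1' : l + 1 ≠ 0 := by positivity
  have h3' : l + 3 ≠ 0 := by positivity
  have hla : l - α ≠ 0 := sub_ne_zero.mpr (ne_of_gt hl)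
  set pt : II := (⟨-1, by norm_num⟩ : II) with hpt
  set γ : ℝ := α / (l - α) with hγ
  set RB : EE →L[ℝ] EE :=
    ROp l + γ • ((ContinuousMap.evalCLM ℝ pt) ∘L (ROp l)).smulRight (1 : EE) with hRB
  set M : EE →L[ℝ] EE := algebraMap ℝ (EE →L[ℝ] EE) l - (AOp + α • KOp) with hM
  have hMapp : ∀ f : EE, M f = l • f - AOp f - α • (f pt • (1 : EE)) := by
    intro f
    rw [hM]
    simp only [ContinuousLinearMap.sub_apply, ContinuousLinearMap.add_apply,
      ContinuousLinearMap.smul_apply, Algebra.algebraMap_eq_smul_one,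
      ContinuousLinearMap.one_apply, KOp_apply]
    module
  have hRBapp : ∀ f : EE, RB f = ROp l f + (γ * (ROp l f) pt) • (1 : EE) := by
    intro f
    rw [hRB]
    simp only [ContinuousLinearMap.add_apply, ContinuousLinearMap.smul_apply,
      ContinuousLinearMap.smulRight_apply, ContinuousLinearMap.comp_apply, evalCLM_apply,
      smul_smul]
  have hmul1 : M * RB = 1 := by
    refine ContinuousLinearMap.ext fun f => ?_
    rw [ContinuousLinearMap.mul_apply, ContinuousLinearMap.one_apply, hRBapp f, hMapp]
    simp only [map_add, _root_.map_smul, AOp_one, AOp_of_R hl0, ContinuousMap.add_apply,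
      ContinuousMap.smul_apply, one_apply', smul_eq_mul]
    match_scalars <;> first | ring1 | (simp only [hγ]; field_simp; ring1)
  have hmul2 : RB * M = 1 := by
    refine ContinuousLinearMap.ext fun f => ?_
    rw [ContinuousLinearMap.mul_apply, ContinuousLinearMap.one_apply, hMapp f, hRBapp]
    have hsub : ROp l (l • f - AOp f - α • (f pt • (1 : EE)))
        = f - (α * f pt / l) • (1 : EE) := by
      rw [map_sub, _root_.map_smul, _root_.map_smul, ROp_one hl0, resolv_R hl0]
      match_scalars <;> first | ring1 | (field_simp; ring1) | field_simp
    rw [hsub]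
    simp only [ContinuousMap.sub_apply, ContinuousMap.smul_apply, one_apply', smul_eq_mul]
    match_scalars <;> first | ring1 | (simp only [hγ]; field_simp; ring1)
  have hu : IsUnit M := ⟨⟨M, RB, hmul1, hmul2⟩, rfl⟩
  refine ⟨hu, ?_⟩
  have hres : resolvent (AOp + α • KOp) l = RB :=
    Ring.inverse_unit (⟨M, RB, hmul1, hmul2⟩ : (EE →L[ℝ] EE)ˣ)
  set n : ℕ := ⌈3 / l⌉₊ + 3 with hn
  set fn : EE := ⟨fun x => ((1 + (x : ℝ)) / 2) ^ n,
    ((continuous_const.add continuous_subtype_val).div_const 2).pow n⟩ with hfn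
  have hfn_nonneg : ∀ x : II, 0 ≤ fn x := by
    intro x
    have hx1 := x.2.1
    apply pow_nonneg
    have : (0 : ℝ) ≤ 1 + (x : ℝ) := by linarith
    positivity
  have hN : (3 : ℝ) / l + 3 ≤ (n : ℝ) := by
    have := Nat.le_ceil (3 / l)
    rw [hn]; push_cast; linarith
  have hN0 : (0 : ℝ) < (n : ℝ) + 1 := by
    have : (0:ℝ) ≤ 3/l := by positivity
    linarith
  have hint : intFunc fn = 2 / ((n : ℝ) + 1) := by
    rw [intFunc_apply]
    have hcong : Set.EqOn (fun x : ℝ => fn (Set.projIcc (-1) 1 (by norm_num) x))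
        (fun x : ℝ => ((1 + x) / 2) ^ n) (Set.uIcc (-1 : ℝ) 1) := by
      intro x hx
      rw [Set.uIcc_of_le (by norm_num)] at hx
      simp only
      rw [Set.projIcc_of_mem _ hx]
      rfl
    rw [intervalIntegral.integral_congr hcong]
    have hform : ∀ x : ℝ, ((1 + x) / 2) ^ n = ((1/2 : ℝ) * x + 1/2) ^ n := by
      intro x; ring_nf
    simp only [hform]
    rw [intervalIntegral.integral_comp_mul_add (fun x : ℝ => x ^ n)
      (by norm_num : (1/2 : ℝ) ≠ 0) (1/2)]
    norm_num [integral_pow]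
    ring
  have hfn_neg1 : fn pt = 0 := by
    rw [hfn, hpt]
    simp only [ContinuousMap.coe_mk]
    norm_num
    omega
  have hfn_S : SOp fn pt = 1 := by
    rw [SOp_apply]
    show ((1 + (-(-1) : ℝ)) / 2) ^ n = 1
    norm_num
  have hP : POp fn pt = 2⁻¹ * (2 / ((n : ℝ) + 1)) := by
    rw [POp_apply, hint]
    simp only [ContinuousMap.smul_apply, one_apply', smul_eq_mul, mul_one]
  have hv : (ROp l fn) pt = (1/l - 1/(l+3)) * (2⁻¹ * (2 / ((n : ℝ) + 1)))
      + ((1/(l+3) - 1/(l+1))/2) := by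
    rw [ROp_apply]
    simp only [ContinuousMap.add_apply, ContinuousMap.smul_apply, smul_eq_mul,
      hfn_neg1, hfn_S, hP]
    ring
  have hvneg : (ROp l fn) pt < 0 := by
    rw [hv]
    have e : (1/l - 1/(l+3)) * (2⁻¹ * (2 / ((n : ℝ) + 1))) + ((1/(l+3) - 1/(l+1))/2)
        = -((l * ((n : ℝ) + 1) - 3 * (l + 1)) / (l * (l+1) * (l+3) * ((n : ℝ) + 1))) := by
      field_simp
      ring
    rw [e, neg_lt_zero]
    apply div_pos
    · have hmul : l * (3 / l + 3) ≤ l * (n : ℝ) :=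
        mul_le_mul_of_nonneg_left hN (le_of_lt hl0)
      have hc : l * (3 / l) = 3 := by field_simp
      nlinarith
    · positivity
  have h1γ : 0 < 1 + γ := by
    rw [hγ]
    have he : 1 + α / (l - α) = l / (l - α) := by field_simp; ring
    rw [he]
    exact div_pos hl0 (by linarith)
  refine ⟨fn, hfn_nonneg, ?_⟩
  have hgoal : resolvent (AOp + α • KOp) l fn pt < 0 := by
    rw [hres, hRBapp]
    simp only [ContinuousMap.add_apply, ContinuousMap.smul_apply, one_apply', smul_eq_mul]
    nlinarith [mul_neg_of_pos_of_neg h1γ hvneg]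
  exact hgoal

end
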